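/- Fix k ∈ ℝ and let BS_k^{-1} : (max(1−e^k,0), 1) → (0,∞) denote the inverse of the strictly increasing function v ↦ BS(k,v) on (0,∞). Then BS_k^{-1} is differentiable on (max(1−e^k,0), 1) and its derivative is (BS_k^{-1})'(x) = 1/φ(d₊(k, BS_k^{-1}(x))), where φ is the standard Gaussian density. -/

import Mathlib

open Real MeasureTheory Set Filter
open scoped ENNReal NNReal

/-- Standard Gaussian density. -/
noncomputable def gaussPdf (x : ℝ) : ℝ := Real.exp (-(x ^ 2) / 2) / Real.sqrt (2 * Real.pi)

/-- Standard Gaussian cumulative distribution function. -/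
noncomputable def gaussCdf (x : ℝ) : ℝ := ∫ t in Set.Iic x, gaussPdf t

noncomputable def dplus (k v : ℝ) : ℝ := -k / v + v / 2
noncomputable def dminus (k v : ℝ) : ℝ := -k / v - v / 2

/-- Black–Scholes call function for `v ∈ (0,∞)`. -/
noncomputable def BS (k v : ℝ) : ℝ :=
  gaussCdf (dplus k v) - Real.exp k * gaussCdf (dminus k v)

/-- Black–Scholes put function for `v ∈ (0,∞)`. -/
noncomputable def BSP (k v : ℝ) : ℝ :=
  Real.exp k * gaussCdf (-(dminus k v)) - gaussCdf (-(dplus k v))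

lemma gaussPdf_pos (x : ℝ) : 0 < gaussPdf x := by
  unfold gaussPdf
  positivity

lemma continuous_gaussPdf : Continuous gaussPdf := by
  unfold gaussPdf
  fun_prop

lemma integrable_gaussPdf : Integrable gaussPdf := by
  have h : Integrable (fun x : ℝ => Real.exp (-(1/2) * x ^ 2)) :=
    integrable_exp_neg_mul_sq (by norm_num)
  have := h.div_const (Real.sqrt (2 * Real.pi))
  convert this using 2 with x
  unfold gaussPdf
  ring_nf

lemma hasDerivAt_gaussCdf (x : ℝ) : HasDerivAt gaussCdf (gaussPdf x) x := by
  have key : gaussCdf = fun y => gaussCdf 0 + ∫ t in (0:ℝ)..y, gaussPdf t := by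
    funext y
    rw [show (∫ t in (0:ℝ)..y, gaussPdf t)
        = (∫ t in Set.Iic y, gaussPdf t) - ∫ t in Set.Iic (0:ℝ), gaussPdf t from
      (intervalIntegral.integral_Iic_sub_Iic integrable_gaussPdf.integrableOn
        integrable_gaussPdf.integrableOn).symm]
    unfold gaussCdf
    ring
  rw [key]
  exact HasDerivAt.const_add (gaussCdf 0)
    (intervalIntegral.integral_hasDerivAt_right
      (integrable_gaussPdf.intervalIntegrable)
      (continuous_gaussPdf.stronglyMeasurable.stronglyMeasurableAtFilter)
      continuous_gaussPdf.continuousAt)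

lemma exp_mul_gaussPdf {k v : ℝ} (hv : v ≠ 0) :
    Real.exp k * gaussPdf (dminus k v) = gaussPdf (dplus k v) := by
  unfold gaussPdf
  rw [mul_div_assoc', ← Real.exp_add]
  congr 1
  unfold dplus dminus
  field_simp
  ring

lemma hasDerivAt_BS {k v : ℝ} (hv : v ≠ 0) :
    HasDerivAt (BS k) (gaussPdf (dplus k v)) v := by
  have hd1 : HasDerivAt (fun v => dplus k v) (k / v ^ 2 + 1 / 2) v := by
    have h1 : HasDerivAt (fun v : ℝ => -k / v) ((0 * v - (-k) * 1) / v ^ 2) v :=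
      (hasDerivAt_const v (-k)).div (hasDerivAt_id v) hv
    have h2 : HasDerivAt (fun v : ℝ => v / 2) (1 / 2) v := (hasDerivAt_id v).div_const 2
    have := h1.add h2
    refine this.congr_deriv ?_
    ring
  have hd2 : HasDerivAt (fun v => dminus k v) (k / v ^ 2 - 1 / 2) v := by
    have h1 : HasDerivAt (fun v : ℝ => -k / v) ((0 * v - (-k) * 1) / v ^ 2) v :=
      (hasDerivAt_const v (-k)).div (hasDerivAt_id v) hv
    have h2 : HasDerivAt (fun v : ℝ => v / 2) (1 / 2) v := (hasDerivAt_id v).div_const 2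
    have := h1.sub h2
    refine this.congr_deriv ?_
    ring
  have h1 := (hasDerivAt_gaussCdf (dplus k v)).comp v hd1
  have h2 := ((hasDerivAt_gaussCdf (dminus k v)).comp v hd2).const_mul (Real.exp k)
  have h := h1.sub h2
  refine h.congr_deriv ?_
  rw [show Real.exp k * (gaussPdf (dminus k v) * (k / v ^ 2 - 1 / 2))
      = gaussPdf (dplus k v) * (k / v ^ 2 - 1 / 2) by
    rw [← mul_assoc, exp_mul_gaussPdf hv]]
  ring

lemma strictMonoOn_BS (k : ℝ) : StrictMonoOn (BS k) (Set.Ioi 0) := by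
  apply strictMonoOn_of_deriv_pos (convex_Ioi 0)
  · exact fun v hv => (hasDerivAt_BS (ne_of_gt hv)).continuousAt.continuousWithinAt
  · intro v hv
    rw [interior_Ioi] at hv
    rw [(hasDerivAt_BS (ne_of_gt hv)).deriv]
    exact gaussPdf_pos _

/-- Derivative of the inverse of `v ↦ BS(k,v)`: if `g` is the (two-sided) inverse of the
strictly increasing map `v ↦ BS(k,v) : (0,∞) → (max (1−e^k) 0, 1)`, then `g` is
differentiable on `(max (1−e^k) 0, 1)` with derivative `1/φ(d₊(k, g x))`. -/
theorem hasDerivAt_BS_inverse (k : ℝ) (g : ℝ → ℝ)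
    (hg_left : ∀ v ∈ Set.Ioi (0 : ℝ), g (BS k v) = v)
    (hg_right : ∀ x ∈ Set.Ioo (max (1 - Real.exp k) 0) 1,
      g x ∈ Set.Ioi (0 : ℝ) ∧ BS k (g x) = x) :
    ∀ x ∈ Set.Ioo (max (1 - Real.exp k) 0) 1,
      HasDerivAt g (1 / gaussPdf (dplus k (g x))) x := by
  intro x hx
  obtain ⟨hgx, hBgx⟩ := hg_right x hx
  set v0 := g x with hv0def
  have hv0 : 0 < v0 := hgx
  -- continuity of g at x
  have hcont : ContinuousAt g x := by
    rw [Metric.continuousAt_iff]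
    intro ε hε
    set η := min (ε / 2) (v0 / 2) with hηdef
    have hη : 0 < η := lt_min (by linarith) (by linarith)
    set a := v0 - η with hadef
    set b := v0 + η with hbdef
    have ha : 0 < a := by
      have : η ≤ v0 / 2 := min_le_right _ _
      simp only [hadef]; linarith
    have hab : a < b := by simp only [hadef, hbdef]; linarith
    have hav : a < v0 := by simp only [hadef]; linarith
    have hvb : v0 < b := by simp only [hbdef]; linarith
    have hBa : BS k a < x := by
      rw [← hBgx]
      exact strictMonoOn_BS k (Set.mem_Ioi.2 ha) (Set.mem_Ioi.2 hv0) hav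
    have hBb : x < BS k b := by
      rw [← hBgx]
      exact strictMonoOn_BS k (Set.mem_Ioi.2 hv0) (Set.mem_Ioi.2 (lt_trans ha hab)) hvb
    refine ⟨min (x - BS k a) (BS k b - x), lt_min (by linarith) (by linarith), ?_⟩
    intro y hy
    rw [Real.dist_eq] at hy
    have hy1 : BS k a < y := by
      have := abs_lt.1 hy
      have h2 := this.1
      have h3 : min (x - BS k a) (BS k b - x) ≤ x - BS k a := min_le_left _ _
      linarith
    have hy2 : y < BS k b := by
      have := abs_lt.1 hy
      have h2 := this.2
      have h3 : min (x - BS k a) (BS k b - x) ≤ BS k b - x := min_le_right _ _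
      linarith
    -- IVT to find v ∈ Ioo a b with BS k v = y
    have hIVT : Set.Ioo (BS k a) (BS k b) ⊆ BS k '' Set.Ioo a b := by
      apply intermediate_value_Ioo (le_of_lt hab)
      intro v hv
      exact (hasDerivAt_BS (ne_of_gt (lt_of_lt_of_le ha hv.1))).continuousAt.continuousWithinAt
    obtain ⟨v, hvmem, hvy⟩ := hIVT ⟨hy1, hy2⟩
    have hgy : g y = v := by rw [← hvy]; exact hg_left v (lt_trans ha hvmem.1)
    rw [Real.dist_eq, hgy]
    have h1 : v0 - η < v := hvmem.1
    have h2 : v < v0 + η := hvmem.2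
    have h3 : η ≤ ε / 2 := min_le_left _ _
    rw [abs_lt]
    constructor <;> linarith
  have hfg : ∀ᶠ y in nhds x, BS k (g y) = y := by
    filter_upwards [isOpen_Ioo.mem_nhds hx] with y hy
    exact (hg_right y hy).2
  have := HasDerivAt.of_local_left_inverse hcont (hasDerivAt_BS (ne_of_gt hv0))
    (ne_of_gt (gaussPdf_pos _)) hfg
  rw [one_div]
  exact this
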